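/- arXiv:1912.08335 — 3 statements merged into one kernel-verified Lean document; each statement's English description precedes it below -/
import Mathlib

section
/- First-order PAC-Bayes bound for the log-loss: Fix a prior probability measure π on Θ, ξ ∈ (0,1), and n ≥ 1. Then, with ν^n-probability at least 1 − ξ over the draw of an i.i.d. sample D = (x_1, …, x_n) from ν, simultaneously for all probability measures ρ on Θ: H(ν) ≤ L̄(ρ) ≤ L̄_J(ρ) ≤ (B/(1 − e^{−B})) · ( ∫ L̂(D, θ) dρ(θ) + (KL(ρ, π) + ln(1/ξ))/n ). -/
/-!
Since `∫ p_ρ dμ ≤ 1`, the first inequality is Gibbs' inequality `-∫ f ln f ≤ -∫ f ln p_ρ`, and the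
second is Jensen's inequality for the concave logarithm followed by Fubini.

For the third, the bounded log-loss puts `-ln p(x|θ)` in `[0, B]`, where the chord bound
`e^{-t} ≤ 1 - c t` with `c = (1 - e^{-B}) / B` gives `∫ p(x|θ) dν(x) ≤ e^{-c L(θ)}`. Hence
`exp (n (c L(θ) - L̂(D, θ)))` has `ν^n`-mean at most `1` for every `θ`, and by Tonelli so does its
`π`-average. By Markov's inequality that average is below `1/ξ` with probability at least `1 - ξ`,
and on this event the Donsker–Varadhan change of measure gives, for all `ρ` at once,
`n (c L̄_J(ρ) - ∫ L̂ dρ) ≤ KL(ρ, π) + ln (1/ξ)`.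
-/

open MeasureTheory Real
open scoped ENNReal

noncomputable section

/-- The predictive density `p_ρ(x) = ∫ p(x|θ) dρ(θ)`. -/
def predictive {X Θ : Type*} [MeasurableSpace Θ] (p : X → Θ → ℝ)
    (ρ : Measure Θ) (x : X) : ℝ := ∫ θ, p x θ ∂ρ

/-- Expected code length of the Bayesian mixture code, `L̄(ρ) = ∫ -ln p_ρ(x) dν(x)`. -/
def codeLength {X Θ : Type*} [MeasurableSpace X] [MeasurableSpace Θ]
    (p : X → Θ → ℝ) (ν : Measure X) (ρ : Measure Θ) : ℝ :=
  ∫ x, -Real.log (predictive p ρ x) ∂ν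

/-- The risk (expected log-loss) of a parameter: `L(θ) = ∫ -ln p(x|θ) dν(x)`. -/
def risk {X Θ : Type*} [MeasurableSpace X] (p : X → Θ → ℝ) (ν : Measure X)
    (θ : Θ) : ℝ := ∫ x, -Real.log (p x θ) ∂ν

/-- The first-order Jensen bound `L̄_J(ρ) = ∫ L(θ) dρ(θ)`. -/
def jensenBound {X Θ : Type*} [MeasurableSpace X] [MeasurableSpace Θ]
    (p : X → Θ → ℝ) (ν : Measure X) (ρ : Measure Θ) : ℝ :=
  ∫ θ, risk p ν θ ∂ρ

/-- Entropy of a measure with density `f` w.r.t. `μ`: `H(ν) = -∫ f ln f dμ`. -/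
def entropy {X : Type*} [MeasurableSpace X] (μ : Measure X) (f : X → ℝ) : ℝ :=
  -∫ x, f x * Real.log (f x) ∂μ

open Classical in
/-- Kullback–Leibler divergence between probability measures on the parameter
space, with value `+∞` when `ρ` is not absolutely continuous w.r.t. the prior (or
the log-likelihood ratio is not integrable). -/
def klDiv' {Θ : Type*} [MeasurableSpace Θ] (ρ pr : Measure Θ) : ℝ≥0∞ :=
  if ρ ≪ pr ∧ MeasureTheory.Integrable (fun θ => Real.log ((ρ.rnDeriv pr θ).toReal)) ρ
  then ENNReal.ofReal (∫ θ, Real.log ((ρ.rnDeriv pr θ).toReal) ∂ρ)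
  else ⊤

/-- Empirical risk of `θ` on the sample `D = (x_1, …, x_n)`:
`L̂(D,θ) = (1/n) Σ_i −ln p(x_i|θ)`. -/
def empRisk {X Θ : Type*} (p : X → Θ → ℝ) (n : ℕ) (D : Fin n → X) (θ : Θ) : ℝ :=
  (1 / (n : ℝ)) * ∑ i : Fin n, -Real.log (p (D i) θ)

open Set

lemma neg_log_mem_Icc_of_mem_Icc {B t : ℝ} (ht : t ∈ Icc (exp (-B)) 1) : -log t ∈ Icc 0 B := by
  have ht0 : 0 < t := (exp_pos _).trans_le ht.1
  exact ⟨neg_nonneg.2 (log_nonpos ht0.le ht.2), neg_le.1 ((le_log_iff_exp_le ht0).2 ht.1)⟩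

lemma exp_neg_le_one_sub_mul_of_mem_Icc {B t : ℝ} (hB : 0 < B) (ht : t ∈ Icc 0 B) :
    exp (-t) ≤ 1 - (1 - exp (-B)) / B * t := by
  have hs : t / B ∈ Icc (0 : ℝ) 1 := ⟨div_nonneg ht.1 hB.le, (div_le_one hB).2 ht.2⟩
  have key := convexOn_exp.2 (mem_univ 0) (mem_univ (-B)) (sub_nonneg.2 hs.2) hs.1
    (sub_add_cancel 1 _)
  simp only [smul_eq_mul, mul_zero, zero_add, exp_zero, mul_one] at key
  calc exp (-t) = exp (t / B * -B) := by field_simp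
    _ ≤ 1 - t / B + t / B * exp (-B) := key
    _ = 1 - (1 - exp (-B)) / B * t := by field_simp; ring

lemma mul_log_sub_mul_log_le {a b : ℝ} (ha : 0 ≤ a) (hab : 0 < a → 0 < b) :
    a * log b - a * log a ≤ max b 0 - a := by
  rcases ha.eq_or_lt with rfl | ha
  · simp
  have hb := hab ha
  have h := log_le_sub_one_of_pos (div_pos hb ha)
  rw [log_div hb.ne' ha.ne'] at h
  calc a * log b - a * log a = a * (log b - log a) := by ring
    _ ≤ a * (b / a - 1) := mul_le_mul_of_nonneg_left h ha.le
    _ = b - a := by field_simp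
    _ ≤ max b 0 - a := by gcongr; exact le_max_left _ _

section Integrals

variable {α : Type*} [MeasurableSpace α] {μ : Measure α}

theorem ofReal_integral_le_lintegral_ofReal (f : α → ℝ) :
    ENNReal.ofReal (∫ x, f x ∂μ) ≤ ∫⁻ x, ENNReal.ofReal (f x) ∂μ := by
  by_cases hf : Integrable f μ
  · calc ENNReal.ofReal (∫ x, f x ∂μ) ≤ ENNReal.ofReal (∫ x, max (f x) 0 ∂μ) :=
          ENNReal.ofReal_le_ofReal (integral_mono hf hf.pos_part fun x => le_max_left _ _)
      _ = ∫⁻ x, ENNReal.ofReal (max (f x) 0) ∂μ :=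
          ofReal_integral_eq_lintegral_ofReal hf.pos_part (ae_of_all _ fun x => le_max_right _ _)
      _ = ∫⁻ x, ENNReal.ofReal (f x) ∂μ := by simp
  · simp [integral_undef hf]

theorem integral_mem_Icc_of_ae_mem_Icc [IsProbabilityMeasure μ] {f : α → ℝ}
    (hf : AEMeasurable f μ) {a b : ℝ} (hab : ∀ᵐ x ∂μ, f x ∈ Icc a b) :
    ∫ x, f x ∂μ ∈ Icc a b := by
  have hint := Integrable.of_mem_Icc a b hf hab
  constructor
  · simpa using integral_mono_ae (integrable_const a) hint (hab.mono fun _ h => h.1)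
  · simpa using integral_mono_ae hint (integrable_const b) (hab.mono fun _ h => h.2)

theorem integral_log_le_log_integral [IsProbabilityMeasure μ] {f : α → ℝ} (hf : AEMeasurable f μ)
    {a b : ℝ} (ha : 0 < a) (hab : ∀ᵐ x ∂μ, f x ∈ Icc a b) :
    ∫ x, log (f x) ∂μ ≤ log (∫ x, f x ∂μ) := by
  have hsub : Icc a b ⊆ Ioi 0 := fun t ht => ha.trans_le ht.1
  have hlog : ∀ᵐ x ∂μ, log (f x) ∈ Icc (log a) (log b) := hab.mono fun x hx =>
    ⟨log_le_log ha hx.1, log_le_log (ha.trans_le hx.1) hx.2⟩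
  exact (strictConcaveOn_log_Ioi.concaveOn.subset hsub (convex_Icc a b)).le_map_integral
    (continuousOn_log.mono fun t ht => (hsub ht).ne') isClosed_Icc hab
    (Integrable.of_mem_Icc a b hf hab)
    (Integrable.of_mem_Icc _ _ (measurable_log.comp_aemeasurable hf) hlog)

theorem integral_mul_log_le_integral_mul_log {f g : α → ℝ} (hf : 0 ≤ f) (hf_int : Integrable f μ)
    (hg : AEMeasurable g μ) (hfg : ∀ᵐ x ∂μ, 0 < f x → 0 < g x)
    (hflogf : Integrable (fun x => f x * log (f x)) μ)
    (hflogg : Integrable (fun x => f x * log (g x)) μ)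
    (hle : ∫⁻ x, ENNReal.ofReal (g x) ∂μ ≤ ∫⁻ x, ENNReal.ofReal (f x) ∂μ) :
    ∫ x, f x * log (g x) ∂μ ≤ ∫ x, f x * log (f x) ∂μ := by
  have hg_lt_top : ∫⁻ x, ENNReal.ofReal (g x) ∂μ < ∞ := hle.trans_lt hf_int.lintegral_lt_top
  have hg_pos_part : Integrable (fun x => max (g x) 0) μ := by
    refine ⟨(hg.sup aemeasurable_const).aestronglyMeasurable, ?_⟩
    simpa [HasFiniteIntegral, Real.enorm_eq_ofReal (le_max_right _ _)] using hg_lt_top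
  have hmass : ∫ x, max (g x) 0 ∂μ ≤ ∫ x, f x ∂μ := by
    rw [integral_eq_lintegral_of_nonneg_ae (f := fun x => max (g x) 0)
        (ae_of_all _ fun x => le_max_right _ _)
        hg_pos_part.aestronglyMeasurable,
      integral_eq_lintegral_of_nonneg_ae (ae_of_all _ hf) hf_int.aestronglyMeasurable]
    simpa using ENNReal.toReal_mono hf_int.lintegral_lt_top.ne hle
  have key : ∫ x, (f x * log (g x) - f x * log (f x)) ∂μ ≤ ∫ x, (max (g x) 0 - f x) ∂μ :=
    integral_mono_ae (hflogg.sub hflogf) (hg_pos_part.sub hf_int)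
      (hfg.mono fun x hx => mul_log_sub_mul_log_le (hf x) hx)
  rw [integral_sub hflogg hflogf, integral_sub hg_pos_part hf_int] at key
  linarith

theorem integrable_neg_log_of_ae_mem_Icc [IsFiniteMeasure μ] {g : α → ℝ} (hg : Measurable g) {B : ℝ}
    (h : ∀ᵐ x ∂μ, g x ∈ Icc (exp (-B)) 1) : Integrable (fun x => -log (g x)) μ :=
  Integrable.of_mem_Icc 0 B (measurable_log.comp hg).neg.aemeasurable
    (h.mono fun _ => neg_log_mem_Icc_of_mem_Icc)

theorem lintegral_pi_prod_eq_pow [IsProbabilityMeasure μ] {g : α → ℝ≥0∞} (hg : Measurable g)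
    (n : ℕ) : ∫⁻ x, ∏ i, g (x i) ∂(Measure.pi fun _ : Fin n => μ) = (∫⁻ a, g a ∂μ) ^ n := by
  rw [ProbabilityTheory.lintegral_prod_eq_prod_lintegral_of_indepFun _ _
      (ProbabilityTheory.iIndepFun_pi fun _ => hg.aemeasurable)
      fun i => hg.comp (measurable_pi_apply i)]
  simp_rw [(measurePreserving_eval (fun _ : Fin n => μ) _).lintegral_comp hg]
  simp

theorem ae_pi_forall_of_ae {ι : Type*} [Fintype ι] [SigmaFinite μ] {q : α → Prop}
    (h : ∀ᵐ x ∂μ, q x) : ∀ᵐ x ∂(Measure.pi fun _ : ι => μ), ∀ i, q (x i) :=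
  ae_all_iff.2 fun i => (Measure.quasiMeasurePreserving_eval _ i).ae h

end Integrals

theorem entropy_le_integral_neg_log {X : Type*} [MeasurableSpace X] {μ ν : Measure X}
    [IsProbabilityMeasure ν] {f : X → ℝ} (hf_meas : Measurable f) (hf_nonneg : 0 ≤ f)
    (hf : ν = μ.withDensity (fun x => ENNReal.ofReal (f x))) {g : X → ℝ} (hg_meas : Measurable g)
    (hg : ∀ᵐ x ∂ν, g x ∈ Ioc 0 1) (hg_log : Integrable (fun x => log (g x)) ν)
    (hg_mass : ∫⁻ x, ENNReal.ofReal (g x) ∂μ ≤ 1) :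
    entropy μ f ≤ ∫ x, -log (g x) ∂ν := by
  by_cases hent : Integrable (fun x => f x * log (f x)) μ
  swap
  · rw [entropy, integral_undef hent, neg_zero]
    exact integral_nonneg_of_ae (hg.mono fun x hx => neg_nonneg.2 (log_nonpos hx.1.le hx.2))
  subst hf
  have hdens : Measurable fun x => ENNReal.ofReal (f x) := hf_meas.ennreal_ofReal
  have hdens_lt_top : ∀ᵐ x ∂μ, ENNReal.ofReal (f x) < ∞ :=
    ae_of_all _ fun _ => ENNReal.ofReal_lt_top
  have htoReal x : (ENNReal.ofReal (f x)).toReal = f x := ENNReal.toReal_ofReal (hf_nonneg x)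
  have hmass : ∫⁻ x, ENNReal.ofReal (f x) ∂μ = 1 := by
    have h := measure_univ (μ := μ.withDensity fun x => ENNReal.ofReal (f x))
    rwa [withDensity_apply _ MeasurableSet.univ, setLIntegral_univ] at h
  have hf_int : Integrable f μ :=
    ⟨hf_meas.aestronglyMeasurable, by
      simp [hasFiniteIntegral_iff_ofReal (ae_of_all _ hf_nonneg), hmass]⟩
  have hfg : ∀ᵐ x ∂μ, 0 < f x → 0 < g x := by
    filter_upwards [(ae_withDensity_iff hdens).1 hg] with x hx hfx
    exact (hx (by simpa using hfx)).1
  have hflogg : Integrable (fun x => f x * log (g x)) μ := by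
    simpa [htoReal] using (integrable_withDensity_iff_integrable_smul' hdens hdens_lt_top).1 hg_log
  rw [entropy, integral_withDensity_eq_integral_toReal_smul hdens hdens_lt_top]
  simp only [htoReal, smul_eq_mul, mul_neg, integral_neg, neg_le_neg_iff]
  exact integral_mul_log_le_integral_mul_log hf_nonneg hf_int hg_meas.aemeasurable hfg hent hflogg
    (hg_mass.trans hmass.ge)

section PACBayes

variable {Ω Θ : Type*} [MeasurableSpace Ω] [MeasurableSpace Θ]

theorem one_sub_le_measure_lintegral_exp_lt (P : Measure Ω) [IsProbabilityMeasure P]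
    (pri : Measure Θ) [IsProbabilityMeasure pri] {G : Θ → Ω → ℝ}
    (hG : Measurable (Function.uncurry G))
    (hmom : ∀ θ, ∫⁻ ω, ENNReal.ofReal (exp (G θ ω)) ∂P ≤ 1) {ξ : ℝ} (hξ : 0 < ξ) :
    ENNReal.ofReal (1 - ξ) ≤
      P {ω | ∫⁻ θ, ENNReal.ofReal (exp (G θ ω)) ∂pri < ENNReal.ofReal (1 / ξ)} := by
  have hexpG : Measurable fun q : Θ × Ω => ENNReal.ofReal (exp (G q.1 q.2)) := by fun_prop
  have hF : Measurable fun ω => ∫⁻ θ, ENNReal.ofReal (exp (G θ ω)) ∂pri :=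
    hexpG.lintegral_prod_left'
  have hmean : ∫⁻ ω, ∫⁻ θ, ENNReal.ofReal (exp (G θ ω)) ∂pri ∂P ≤ 1 := by
    rw [← lintegral_lintegral_swap hexpG.aemeasurable]
    simpa using lintegral_mono (μ := pri) hmom
  have hbad : P {ω | ENNReal.ofReal (1 / ξ) ≤ ∫⁻ θ, ENNReal.ofReal (exp (G θ ω)) ∂pri}
      ≤ ENNReal.ofReal ξ := by
    refine (meas_ge_le_lintegral_div hF.aemeasurable (by simpa using hξ)
      ENNReal.ofReal_ne_top).trans ?_
    calc (∫⁻ ω, ∫⁻ θ, ENNReal.ofReal (exp (G θ ω)) ∂pri ∂P) / ENNReal.ofReal (1 / ξ)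
        ≤ 1 / ENNReal.ofReal (1 / ξ) := by gcongr
      _ = ENNReal.ofReal ξ := by
        rw [one_div, one_div, ENNReal.ofReal_inv_of_pos hξ, inv_inv]
  simp_rw [← not_le]
  rw [← compl_ofPred, prob_compl_eq_one_sub (measurableSet_le measurable_const hF)]
  calc ENNReal.ofReal (1 - ξ) = 1 - ENNReal.ofReal ξ := by
        rw [ENNReal.ofReal_sub _ hξ.le, ENNReal.ofReal_one]
    _ ≤ _ := tsub_le_tsub_left hbad 1

-- Donsker–Varadhan: the gap is `KL(ρ, π_h) ≥ 0` for the tilted measure `π_h ∝ e^h π`.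
theorem integral_sub_log_integral_exp_le_integral_llr {ρ pri : Measure Θ} [IsProbabilityMeasure ρ]
    [IsProbabilityMeasure pri] (hρpri : ρ ≪ pri) (hllr : Integrable (llr ρ pri) ρ) {h : Θ → ℝ}
    (hh : Integrable h ρ) (hexp : Integrable (fun θ => exp (h θ)) pri) :
    ∫ θ, h θ ∂ρ - log (∫ θ, exp (h θ) ∂pri) ≤ ∫ θ, llr ρ pri θ ∂ρ := by
  have : IsProbabilityMeasure (pri.tilted h) := isProbabilityMeasure_tilted hexp
  have hgibbs := InformationTheory.integral_llr_add_sub_measure_univ_nonneg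
    (hρpri.trans (absolutelyContinuous_tilted hexp))
    (integrable_llr_tilted_right hρpri hh hllr hexp)
  rw [integral_llr_tilted_right hρpri hh hexp hllr] at hgibbs
  simp only [probReal_univ] at hgibbs
  linarith

theorem pac_bayes_of_lintegral_exp_le_one (P : Measure Ω) [IsProbabilityMeasure P]
    (pri : Measure Θ) [IsProbabilityMeasure pri] {G : Θ → Ω → ℝ}
    (hG : Measurable (Function.uncurry G))
    (hmom : ∀ θ, ∫⁻ ω, ENNReal.ofReal (exp (G θ ω)) ∂P ≤ 1) {ξ : ℝ} (hξ : 0 < ξ) :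
    ENNReal.ofReal (1 - ξ) ≤
      P {ω | ∀ ρ : Measure Θ, IsProbabilityMeasure ρ → ρ ≪ pri → Integrable (llr ρ pri) ρ →
        Integrable (fun θ => G θ ω) ρ → ∫ θ, G θ ω ∂ρ ≤ ∫ θ, llr ρ pri θ ∂ρ + log (1 / ξ)} := by
  refine (one_sub_le_measure_lintegral_exp_lt P pri hG hmom hξ).trans (measure_mono ?_)
  intro ω hω ρ _ hρpri hllr hGω
  have hexp : Integrable (fun θ => exp (G θ ω)) pri := by
    refine ⟨(hG.comp measurable_prodMk_right).exp.aestronglyMeasurable, ?_⟩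
    simpa [HasFiniteIntegral, Real.enorm_eq_ofReal (exp_pos _).le] using
      hω.trans ENNReal.ofReal_lt_top
  have hmass : ∫ θ, exp (G θ ω) ∂pri ≤ 1 / ξ := by
    rw [integral_eq_lintegral_of_nonneg_ae (ae_of_all _ fun θ => (exp_pos _).le)
      hexp.aestronglyMeasurable]
    exact ENNReal.toReal_le_of_le_ofReal (by positivity) hω.le
  have hDV := integral_sub_log_integral_exp_le_integral_llr hρpri hllr hGω hexp
  have := log_le_log (integral_exp_pos hexp) hmass
  linarith

end PACBayes

theorem klDiv'_ne_top_iff {Θ : Type*} [MeasurableSpace Θ] {ρ pri : Measure Θ} :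
    klDiv' ρ pri ≠ ⊤ ↔ ρ ≪ pri ∧ Integrable (llr ρ pri) ρ := by
  unfold klDiv'
  split_ifs with h <;> simp [h, llr_def]

theorem integral_llr_le_toReal_klDiv' {Θ : Type*} [MeasurableSpace Θ] {ρ pri : Measure Θ}
    (h : ρ ≪ pri ∧ Integrable (llr ρ pri) ρ) : ∫ θ, llr ρ pri θ ∂ρ ≤ (klDiv' ρ pri).toReal := by
  simp only [llr_def] at h ⊢
  rw [klDiv', if_pos h, ENNReal.toReal_ofReal']
  exact le_max_left _ _

theorem natCast_mul_empRisk {X Θ : Type*} (p : X → Θ → ℝ) (n : ℕ) (D : Fin n → X) (θ : Θ) :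
    (n : ℝ) * empRisk p n D θ = ∑ i, -log (p (D i) θ) := by
  rcases n.eq_zero_or_pos with rfl | hn
  · simp
  · rw [empRisk]
    field_simp

def BoundedLogLoss {X Θ : Type*} [MeasurableSpace X] (p : X → Θ → ℝ) (ν : Measure X) (B : ℝ) :
    Prop :=
  ∀ θ, ∀ᵐ x ∂ν, p x θ ∈ Icc (exp (-B)) 1

section Model

variable {X Θ : Type*} [MeasurableSpace X] [MeasurableSpace Θ] {p : X → Θ → ℝ} {ν : Measure X}
  {B : ℝ}

theorem measurable_predictive (hp_meas : Measurable (Function.uncurry p)) (ρ : Measure Θ)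
    [SFinite ρ] : Measurable (predictive p ρ) :=
  hp_meas.stronglyMeasurable.integral_prod_right.measurable

theorem measurable_risk [SFinite ν] (hp_meas : Measurable (Function.uncurry p)) :
    Measurable (risk p ν) :=
  (measurable_log.comp hp_meas).neg.stronglyMeasurable.integral_prod_left.measurable

theorem risk_mem_Icc [IsProbabilityMeasure ν] (hp_meas : Measurable (Function.uncurry p))
    (hbound : BoundedLogLoss p ν B) (θ : Θ) : risk p ν θ ∈ Icc 0 B :=
  integral_mem_Icc_of_ae_mem_Icc
    (measurable_log.comp (hp_meas.comp measurable_prodMk_right)).neg.aemeasurable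
    ((hbound θ).mono fun _ => neg_log_mem_Icc_of_mem_Icc)

theorem ae_ae_mem_Icc [SFinite ν] (hp_meas : Measurable (Function.uncurry p))
    (hbound : BoundedLogLoss p ν B) (ρ : Measure Θ) [SFinite ρ] :
    ∀ᵐ x ∂ν, ∀ᵐ θ ∂ρ, p x θ ∈ Icc (exp (-B)) 1 :=
  (Measure.ae_ae_comm (p := fun x θ => p x θ ∈ Icc (exp (-B)) 1)
    (hp_meas measurableSet_Icc)).2 (ae_of_all _ hbound)

theorem ae_predictive_mem_Icc [SFinite ν] (hp_meas : Measurable (Function.uncurry p))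
    (hbound : BoundedLogLoss p ν B) (ρ : Measure Θ) [IsProbabilityMeasure ρ] :
    ∀ᵐ x ∂ν, predictive p ρ x ∈ Icc (exp (-B)) 1 :=
  (ae_ae_mem_Icc hp_meas hbound ρ).mono fun _ hx =>
    integral_mem_Icc_of_ae_mem_Icc (hp_meas.comp measurable_prodMk_left).aemeasurable hx

theorem codeLength_le_jensenBound [IsProbabilityMeasure ν]
    (hp_meas : Measurable (Function.uncurry p))
    (hbound : BoundedLogLoss p ν B) (ρ : Measure Θ) [IsProbabilityMeasure ρ] :
    codeLength p ν ρ ≤ jensenBound p ν ρ := by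
  have hae := ae_ae_mem_Icc hp_meas hbound ρ
  have hint : Integrable (fun q : X × Θ => -log (p q.1 q.2)) (ν.prod ρ) :=
    integrable_neg_log_of_ae_mem_Icc hp_meas
      ((Measure.ae_prod_iff_ae_ae (hp_meas measurableSet_Icc)).2 hae)
  calc codeLength p ν ρ = ∫ x, -log (predictive p ρ x) ∂ν := rfl
    _ ≤ ∫ x, ∫ θ, -log (p x θ) ∂ρ ∂ν := by
      refine integral_mono_ae (integrable_neg_log_of_ae_mem_Icc (measurable_predictive hp_meas ρ)
        (ae_predictive_mem_Icc hp_meas hbound ρ)) hint.integral_prod_left (hae.mono fun x hx => ?_)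
      show -log (∫ θ, p x θ ∂ρ) ≤ ∫ θ, -log (p x θ) ∂ρ
      rw [integral_neg, neg_le_neg_iff]
      exact integral_log_le_log_integral (hp_meas.comp measurable_prodMk_left).aemeasurable
        (exp_pos _) hx
    _ = ∫ θ, ∫ x, -log (p x θ) ∂ν ∂ρ := integral_integral_swap hint
    _ = jensenBound p ν ρ := rfl

theorem lintegral_ofReal_predictive_le_one {μ : Measure X} [SFinite μ]
    (hp_meas : Measurable (Function.uncurry p))
    (hp_dens : ∀ θ, IsProbabilityMeasure (μ.withDensity (fun x => ENNReal.ofReal (p x θ))))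
    (ρ : Measure Θ) [IsProbabilityMeasure ρ] :
    ∫⁻ x, ENNReal.ofReal (predictive p ρ x) ∂μ ≤ 1 := by
  have hmass : ∀ θ, ∫⁻ x, ENNReal.ofReal (p x θ) ∂μ = 1 := fun θ => by
    have h := (hp_dens θ).measure_univ
    rwa [withDensity_apply _ MeasurableSet.univ, setLIntegral_univ] at h
  calc ∫⁻ x, ENNReal.ofReal (predictive p ρ x) ∂μ
      ≤ ∫⁻ x, ∫⁻ θ, ENNReal.ofReal (p x θ) ∂ρ ∂μ :=
        lintegral_mono fun x => ofReal_integral_le_lintegral_ofReal _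
    _ = ∫⁻ θ, ∫⁻ x, ENNReal.ofReal (p x θ) ∂μ ∂ρ :=
        lintegral_lintegral_swap hp_meas.ennreal_ofReal.aemeasurable
    _ = 1 := by simp [hmass]

theorem entropy_le_codeLength {μ : Measure X} [SigmaFinite μ] [IsProbabilityMeasure ν] {f : X → ℝ}
    (hf_meas : Measurable f) (hf_nonneg : 0 ≤ f)
    (hf : ν = μ.withDensity (fun x => ENNReal.ofReal (f x)))
    (hp_meas : Measurable (Function.uncurry p))
    (hp_dens : ∀ θ, IsProbabilityMeasure (μ.withDensity (fun x => ENNReal.ofReal (p x θ))))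
    (hbound : BoundedLogLoss p ν B) (ρ : Measure Θ) [IsProbabilityMeasure ρ] :
    entropy μ f ≤ codeLength p ν ρ := by
  have hpred := ae_predictive_mem_Icc hp_meas hbound ρ
  refine entropy_le_integral_neg_log hf_meas hf_nonneg hf (measurable_predictive hp_meas ρ)
    (hpred.mono fun _ h => ⟨(exp_pos _).trans_le h.1, h.2⟩) ?_
    (lintegral_ofReal_predictive_le_one hp_meas hp_dens ρ)
  simpa using (integrable_neg_log_of_ae_mem_Icc (measurable_predictive hp_meas ρ) hpred).neg

theorem integral_le_exp_neg_mul_risk [IsProbabilityMeasure ν]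
    (hp_meas : Measurable (Function.uncurry p))
    (hbound : BoundedLogLoss p ν B) (hB : 0 < B) (θ : Θ) :
    ∫ x, p x θ ∂ν ≤ exp (-((1 - exp (-B)) / B * risk p ν θ)) := by
  set c := (1 - exp (-B)) / B
  have hmeas : Measurable fun x => p x θ := hp_meas.comp measurable_prodMk_right
  have hlog_int := integrable_neg_log_of_ae_mem_Icc hmeas (hbound θ)
  have hchord : ∀ᵐ x ∂ν, p x θ ≤ 1 - c * -log (p x θ) := (hbound θ).mono fun x hx => by
    calc p x θ = exp (-(-log (p x θ))) := by rw [neg_neg, exp_log ((exp_pos _).trans_le hx.1)]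
      _ ≤ _ := exp_neg_le_one_sub_mul_of_mem_Icc hB (neg_log_mem_Icc_of_mem_Icc hx)
  calc ∫ x, p x θ ∂ν ≤ ∫ x, (1 - c * -log (p x θ)) ∂ν :=
        integral_mono_ae (Integrable.of_mem_Icc _ _ hmeas.aemeasurable (hbound θ))
          ((integrable_const 1).sub (hlog_int.const_mul c)) hchord
    _ = 1 - c * risk p ν θ := by
        rw [integral_sub (integrable_const 1) (hlog_int.const_mul c), integral_const_mul]
        simp [risk]
    _ ≤ exp (-(c * risk p ν θ)) := by linarith [add_one_le_exp (-(c * risk p ν θ))]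

theorem ae_ae_pi_forall_mem_Icc [IsProbabilityMeasure ν]
    (hp_meas : Measurable (Function.uncurry p))
    (hbound : BoundedLogLoss p ν B) (n : ℕ) (pri : Measure Θ) [SFinite pri] :
    ∀ᵐ D ∂(Measure.pi fun _ : Fin n => ν), ∀ᵐ θ ∂pri, ∀ i, p (D i) θ ∈ Icc (exp (-B)) 1 := by
  have hS : MeasurableSet {q : (Fin n → X) × Θ | ∀ i, p (q.1 i) q.2 ∈ Icc (exp (-B)) 1} := by
    simp only [ofPred_forall]
    exact MeasurableSet.iInter fun i =>
      hp_meas.comp (f := fun q : (Fin n → X) × Θ => (q.1 i, q.2)) (by fun_prop) measurableSet_Icc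
  exact (Measure.ae_ae_comm hS).2 (ae_of_all _ fun θ => ae_pi_forall_of_ae (hbound θ))

theorem lintegral_exp_mul_sub_empRisk_le_one [IsProbabilityMeasure ν]
    (hp_meas : Measurable (Function.uncurry p))
    (hbound : BoundedLogLoss p ν B) (hB : 0 < B) (n : ℕ) (θ : Θ) :
    ∫⁻ D, ENNReal.ofReal (exp (n * ((1 - exp (-B)) / B * risk p ν θ - empRisk p n D θ)))
      ∂(Measure.pi fun _ : Fin n => ν) ≤ 1 := by
  set c := (1 - exp (-B)) / B
  set L := risk p ν θ
  have hmeas : Measurable fun x => p x θ := hp_meas.comp measurable_prodMk_right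
  have hprod : ∀ᵐ D ∂(Measure.pi fun _ : Fin n => ν),
      ENNReal.ofReal (exp (n * (c * L - empRisk p n D θ)))
        = ENNReal.ofReal (exp (n * c * L)) * ∏ i, ENNReal.ofReal (p (D i) θ) := by
    filter_upwards [ae_pi_forall_of_ae (ι := Fin n) (hbound θ)] with D hD
    have hpos i : 0 < p (D i) θ := (exp_pos _).trans_le (hD i).1
    rw [mul_sub, natCast_mul_empRisk, Finset.sum_neg_distrib, sub_neg_eq_add, exp_add, exp_sum,
      Finset.prod_congr rfl fun i _ => exp_log (hpos i), ENNReal.ofReal_mul (exp_pos _).le,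
      ENNReal.ofReal_prod_of_nonneg fun i _ => (hpos i).le, mul_assoc]
  have hmean_nonneg : 0 ≤ ∫ x, p x θ ∂ν :=
    integral_nonneg_of_ae ((hbound θ).mono fun _ h => (exp_pos _).le.trans h.1)
  calc _ = ENNReal.ofReal (exp (n * c * L)) * (∫⁻ x, ENNReal.ofReal (p x θ) ∂ν) ^ n := by
        rw [lintegral_congr_ae hprod, lintegral_const_mul' _ _ ENNReal.ofReal_ne_top,
          lintegral_pi_prod_eq_pow hmeas.ennreal_ofReal]
    _ = ENNReal.ofReal (exp (n * c * L) * (∫ x, p x θ ∂ν) ^ n) := by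
        rw [← ofReal_integral_eq_lintegral_ofReal
            (Integrable.of_mem_Icc _ _ hmeas.aemeasurable (hbound θ))
            ((hbound θ).mono fun _ h => (exp_pos _).le.trans h.1),
          ← ENNReal.ofReal_pow hmean_nonneg, ← ENNReal.ofReal_mul (exp_pos _).le]
    _ ≤ ENNReal.ofReal (exp (n * c * L) * exp (-(c * L)) ^ n) := by
        gcongr
        exact integral_le_exp_neg_mul_risk hp_meas hbound hB θ
    _ = 1 := by
        rw [← exp_nat_mul, ← exp_add]
        ring_nf
        simp

theorem measurable_uncurry_mul_risk_sub_empRisk [SFinite ν]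
    (hp_meas : Measurable (Function.uncurry p)) (n : ℕ) (c : ℝ) :
    Measurable (Function.uncurry fun θ (D : Fin n → X) =>
      (n : ℝ) * (c * risk p ν θ - empRisk p n D θ)) := by
  have hpi i : Measurable fun q : Θ × (Fin n → X) => p (q.2 i) q.1 :=
    hp_meas.comp (f := fun q : Θ × (Fin n → X) => (q.2 i, q.1)) (by fun_prop)
  have hrisk := measurable_risk (ν := ν) hp_meas
  unfold empRisk
  fun_prop

theorem integrable_empRisk (hp_meas : Measurable (Function.uncurry p)) {n : ℕ} {D : Fin n → X}
    {ρ : Measure Θ} [IsFiniteMeasure ρ]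
    (hD : ∀ᵐ θ ∂ρ, ∀ i, p (D i) θ ∈ Icc (exp (-B)) 1) : Integrable (empRisk p n D) ρ :=
  (integrable_finsetSum _ fun i _ => integrable_neg_log_of_ae_mem_Icc
    (hp_meas.comp measurable_prodMk_left) (hD.mono fun _ h => h i)).const_mul _

end Model

theorem first_order_pac_bayes_bound_general
    {X : Type*} [MeasurableSpace X] (μ : Measure X) [SigmaFinite μ]
    (ν : Measure X) [IsProbabilityMeasure ν]
    (f : X → ℝ) (hf_meas : Measurable f) (hf_nonneg : 0 ≤ f)
    (hf : ν = μ.withDensity (fun x => ENNReal.ofReal (f x)))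
    {Θ : Type*} [MeasurableSpace Θ]
    (p : X → Θ → ℝ) (hp_meas : Measurable (Function.uncurry p))
    (hp_dens : ∀ θ, IsProbabilityMeasure
      (μ.withDensity (fun x => ENNReal.ofReal (p x θ))))
    (B : ℝ) (hB : 0 < B)
    (hbound : ∀ θ, ∀ᵐ x ∂ν, Real.exp (-B) ≤ p x θ ∧ p x θ ≤ 1)
    (pri : Measure Θ) [IsProbabilityMeasure pri]
    (ξ : ℝ) (hξ : 0 < ξ) (n : ℕ) (hn : 1 ≤ n) :
    ENNReal.ofReal (1 - ξ) ≤
      (Measure.pi fun _ : Fin n => ν)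
        {D : Fin n → X | ∀ ρ : Measure Θ, IsProbabilityMeasure ρ →
          entropy μ f ≤ codeLength p ν ρ ∧
          codeLength p ν ρ ≤ jensenBound p ν ρ ∧
          (klDiv' ρ pri ≠ ⊤ →
            jensenBound p ν ρ ≤ (B / (1 - Real.exp (-B))) *
              ((∫ θ, empRisk p n D θ ∂ρ) +
               ((klDiv' ρ pri).toReal + Real.log (1 / ξ)) / n))} := by
  set c := (1 - exp (-B)) / B with hc_def
  have hc : 0 < c := div_pos (sub_pos.2 (exp_lt_one_iff.2 (neg_lt_zero.2 hB))) hB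
  have hn' : (0 : ℝ) < n := by exact_mod_cast hn
  refine (pac_bayes_of_lintegral_exp_le_one _ pri
    (measurable_uncurry_mul_risk_sub_empRisk hp_meas n c)
    (lintegral_exp_mul_sub_empRisk_le_one hp_meas hbound hB n) hξ).trans (measure_mono_ae ?_)
  filter_upwards [ae_ae_pi_forall_mem_Icc hp_meas hbound n pri] with D hD hPB ρ hρ
  refine ⟨entropy_le_codeLength hf_meas hf_nonneg hf hp_meas hp_dens hbound ρ,
    codeLength_le_jensenBound hp_meas hbound ρ, fun hKL => ?_⟩
  have hρpri := klDiv'_ne_top_iff.1 hKL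
  have hrisk : Integrable (risk p ν) ρ := Integrable.of_mem_Icc 0 B
    (measurable_risk hp_meas).aemeasurable (ae_of_all _ (risk_mem_Icc hp_meas hbound))
  have hemp := integrable_empRisk hp_meas (hρpri.1.ae_le hD)
  have hPBρ := hPB ρ hρ hρpri.1 hρpri.2 (((hrisk.const_mul c).sub hemp).const_mul _)
  rw [integral_const_mul, integral_sub (hrisk.const_mul c) hemp, integral_const_mul] at hPBρ
  have hkl := integral_llr_le_toReal_klDiv' hρpri
  rw [show B / (1 - exp (-B)) = c⁻¹ by rw [hc_def, inv_div]]
  change (n : ℝ) * (c * jensenBound p ν ρ - ∫ θ, empRisk p n D θ ∂ρ) ≤ _ at hPBρ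
  rw [inv_mul_eq_div, le_div_iff₀' hc, ← sub_le_iff_le_add', le_div_iff₀ hn']
  linarith

/-- First-order PAC-Bayes bound for the log-loss: with
`ν^n`-probability at least `1 − ξ` over an i.i.d. sample `D`, simultaneously for
all probability measures `ρ` on `Θ`,
`H(ν) ≤ L̄(ρ) ≤ L̄_J(ρ) ≤ (B/(1−e^{−B}))(∫ L̂(D,θ) dρ(θ) + (KL(ρ,π) + ln(1/ξ))/n)`
(the last inequality being trivially true when `KL(ρ,π) = ∞`). -/
theorem first_order_pac_bayes_bound
    {X : Type*} [MeasurableSpace X] (μ : Measure X) [SigmaFinite μ]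
    (ν : Measure X) [IsProbabilityMeasure ν]
    (f : X → ℝ) (hf_meas : Measurable f) (hf_nonneg : 0 ≤ f)
    (hf : ν = μ.withDensity (fun x => ENNReal.ofReal (f x)))
    {Θ : Type*} [MeasurableSpace Θ]
    (p : X → Θ → ℝ) (hp_meas : Measurable (Function.uncurry p))
    (hp_dens : ∀ θ, IsProbabilityMeasure
      (μ.withDensity (fun x => ENNReal.ofReal (p x θ))))
    (B : ℝ) (hB : 0 < B)
    (hbound : ∀ θ, ∀ᵐ x ∂ν, Real.exp (-B) ≤ p x θ ∧ p x θ ≤ 1)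
    (pri : Measure Θ) [IsProbabilityMeasure pri]
    (ξ : ℝ) (hξ : 0 < ξ) (hξ1 : ξ < 1) (n : ℕ) (hn : 1 ≤ n) :
    ENNReal.ofReal (1 - ξ) ≤
      (Measure.pi fun _ : Fin n => ν)
        {D : Fin n → X | ∀ ρ : Measure Θ, IsProbabilityMeasure ρ →
          entropy μ f ≤ codeLength p ν ρ ∧
          codeLength p ν ρ ≤ jensenBound p ν ρ ∧
          (klDiv' ρ pri ≠ ⊤ →
            jensenBound p ν ρ ≤ (B / (1 - Real.exp (-B))) *
              ((∫ θ, empRisk p n D θ ∂ρ) +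
               ((klDiv' ρ pri).toReal + Real.log (1 / ξ)) / n))} :=
  first_order_pac_bayes_bound_general μ ν f hf_meas hf_nonneg hf p hp_meas hp_dens B hB hbound pri ξ
    hξ n hn

end
end

section
/- PAC bound for point estimates under a discrete prior: Let S ⊆ Θ be countable and let π_F be the discrete prior π_F = Σ_{θ′ ∈ S} w_{θ′} δ_{θ′} with weights w_{θ′} ≥ 0 summing to 1. Fix ξ ∈ (0,1) and n ≥ 1. Then, with ν^n-probability at least 1 − ξ over the draw of an i.i.d. sample D = (x_1, …, x_n) from ν, simultaneously for all θ ∈ S with w_θ > 0: L(θ) ≤ (B/(1 − e^{−B})) · ( L̂(D, θ) − (ln w_θ + ln ξ)/n ). -/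
open MeasureTheory Real
open scoped ENNReal

noncomputable section

/-!
The log-loss `ℓ = -ln p(·|θ)` takes values in `[0, B]`, where `e^{-x}` lies below its chord, so
`E e^{-ℓ} ≤ 1 - c E ℓ ≤ e^{-c L(θ)}` with `c = (1 - e^{-B})/B`. The Chernoff bound for the lower
tail of the i.i.d. sum `n L̂(D, θ)` then shows that the bound for a single `θ` fails with
probability at most `w_θ ξ`, and a union bound over the countable set `S` weighted by the prior
costs at most `Σ_θ w_θ ξ = ξ`.
-/

open ProbabilityTheory

lemma neg_log_mem_Icc_of_exp_neg_le {B y : ℝ} (h₀ : exp (-B) ≤ y) (h₁ : y ≤ 1) :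
    -log y ∈ Set.Icc 0 B := by
  have hy : 0 < y := (exp_pos _).trans_le h₀
  have hlog : -B ≤ log y := by simpa only [log_exp] using log_le_log (exp_pos _) h₀
  exact ⟨neg_nonneg.2 (log_nonpos hy.le h₁), by linarith⟩

lemma exp_neg_le_one_sub_mul {B x : ℝ} (hB : 0 < B) (hx : x ∈ Set.Icc 0 B) :
    exp (-x) ≤ 1 - (1 - exp (-B)) / B * x := by
  have hs₀ : 0 ≤ x / B := div_nonneg hx.1 hB.le
  have hs₁ : x / B ≤ 1 := (div_le_one hB).2 hx.2
  have hchord := convexOn_exp.2 (Set.mem_univ 0) (Set.mem_univ (-B)) (sub_nonneg.2 hs₁) hs₀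
    (sub_add_cancel 1 _)
  have hpoint : (1 - x / B) • (0 : ℝ) + (x / B) • -B = -x := by
    simp only [smul_eq_mul, mul_zero, zero_add, mul_neg, div_mul_cancel₀ x hB.ne']
  rw [hpoint, exp_zero, smul_eq_mul, smul_eq_mul] at hchord
  calc exp (-x) ≤ (1 - x / B) * 1 + x / B * exp (-B) := hchord
    _ = 1 - (1 - exp (-B)) / B * x := by field_simp; ring

lemma exp_mul_sum_eq_prod {ι : Type*} [Fintype ι] (t : ℝ) (f : ι → ℝ) :
    exp (t * ∑ i, f i) = ∏ i, exp (t * f i) := by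
  rw [Finset.mul_sum, exp_sum]

section Chernoff

variable {X : Type*} [MeasurableSpace X] {ν : Measure X} {ℓ : X → ℝ} {B : ℝ}

lemma mgf_sum_pi {ι : Type*} [Fintype ι] [SigmaFinite ν] (t : ℝ) :
    mgf (fun D : ι → X => ∑ i, ℓ (D i)) (Measure.pi fun _ => ν) t = mgf ℓ ν t ^ Fintype.card ι := by
  simp only [mgf, exp_mul_sum_eq_prod]
  exact integral_fintype_prod_eq_pow fun x => exp (t * ℓ x)

lemma integrable_exp_mul_sum_pi {ι : Type*} [Fintype ι] [SigmaFinite ν] {t : ℝ}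
    (h : Integrable (fun x => exp (t * ℓ x)) ν) :
    Integrable (fun D : ι → X => exp (t * ∑ i, ℓ (D i))) (Measure.pi fun _ => ν) := by
  simp only [exp_mul_sum_eq_prod]
  exact Integrable.fintype_prod fun _ => h

lemma integrable_exp_neg_one_mul [IsFiniteMeasure ν] (hℓ : AEMeasurable ℓ ν)
    (hℓ₀ : ∀ᵐ x ∂ν, 0 ≤ ℓ x) : Integrable (fun x => exp (-1 * ℓ x)) ν :=
  Integrable.of_mem_Icc 0 1 (by fun_prop) <| hℓ₀.mono fun _ hx =>
    ⟨(exp_pos _).le, exp_le_one_iff.2 (by linarith)⟩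

variable [IsProbabilityMeasure ν]

lemma mgf_neg_one_le (hB : 0 < B) (hℓ : AEMeasurable ℓ ν)
    (hbd : ∀ᵐ x ∂ν, ℓ x ∈ Set.Icc 0 B) :
    mgf ℓ ν (-1) ≤ exp (-((1 - exp (-B)) / B * ∫ x, ℓ x ∂ν)) := by
  set c := (1 - exp (-B)) / B
  have hint : Integrable ℓ ν := Integrable.of_mem_Icc 0 B hℓ hbd
  have hint_exp := integrable_exp_neg_one_mul hℓ (hbd.mono fun _ hx => hx.1)
  calc mgf ℓ ν (-1) ≤ ∫ x, (1 - c * ℓ x) ∂ν := by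
        refine integral_mono_ae hint_exp ((integrable_const 1).sub (hint.const_mul c)) ?_
        filter_upwards [hbd] with x hx
        simpa only [neg_one_mul] using exp_neg_le_one_sub_mul hB hx
    _ = -(c * ∫ x, ℓ x ∂ν) + 1 := by
        rw [integral_sub (integrable_const 1) (hint.const_mul c), integral_const_mul]
        simp only [integral_const, probReal_univ, smul_eq_mul, one_mul]
        ring
    _ ≤ exp (-(c * ∫ x, ℓ x ∂ν)) := add_one_le_exp _

lemma measureReal_sum_le_le_exp (hB : 0 < B) (hℓ : AEMeasurable ℓ ν)
    (hbd : ∀ᵐ x ∂ν, ℓ x ∈ Set.Icc 0 B) (n : ℕ) (t : ℝ) :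
    (Measure.pi fun _ : Fin n => ν).real
      {D | ∑ i, ℓ (D i) ≤ (1 - exp (-B)) / B * (n * ∫ x, ℓ x ∂ν) + t} ≤ exp t := by
  set c := (1 - exp (-B)) / B
  have hint_exp := integrable_exp_neg_one_mul hℓ (hbd.mono fun _ hx => hx.1)
  calc _ ≤ exp (-(-1) * (c * (n * ∫ x, ℓ x ∂ν) + t)) *
        mgf (fun D : Fin n → X => ∑ i, ℓ (D i)) (Measure.pi fun _ => ν) (-1) :=
        measure_le_le_exp_mul_mgf _ (by norm_num) (integrable_exp_mul_sum_pi hint_exp)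
    _ ≤ exp (c * (n * ∫ x, ℓ x ∂ν) + t) * exp (-(c * ∫ x, ℓ x ∂ν)) ^ n := by
        rw [mgf_sum_pi, Fintype.card_fin, neg_neg, one_mul]
        gcongr
        · exact mgf_nonneg
        · exact mgf_neg_one_le hB hℓ hbd
    _ = exp t := by
        rw [← exp_nat_mul, ← exp_add]
        ring_nf

lemma measure_not_le_empirical_bound_le (hB : 0 < B) (hℓ : AEMeasurable ℓ ν)
    (hbd : ∀ᵐ x ∂ν, ℓ x ∈ Set.Icc 0 B) {n : ℕ} (hn : 1 ≤ n) {δ : ℝ} (hδ : 0 < δ) :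
    (Measure.pi fun _ : Fin n => ν)
      {D | ¬ ∫ x, ℓ x ∂ν ≤ B / (1 - exp (-B)) * (1 / (n : ℝ) * ∑ i, ℓ (D i) - log δ / n)}
      ≤ ENNReal.ofReal δ := by
  have hn₀ : (0 : ℝ) < n := by exact_mod_cast hn
  have hc : 0 < (1 - exp (-B)) / B := div_pos (by simpa using hB) hB
  calc _ ≤ (Measure.pi fun _ : Fin n => ν)
        {D | ∑ i, ℓ (D i) ≤ (1 - exp (-B)) / B * (n * ∫ x, ℓ x ∂ν) + log δ} := by
        refine measure_mono fun D hD => ?_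
        rw [Set.mem_ofPred_eq, not_le, ← one_div_div, one_div_mul_eq_div, div_lt_iff₀ hc,
          one_div_mul_eq_div, ← sub_div, div_lt_iff₀ hn₀] at hD
        rw [Set.mem_ofPred_eq]
        linarith
    _ = ENNReal.ofReal ((Measure.pi fun _ : Fin n => ν).real
        {D | ∑ i, ℓ (D i) ≤ (1 - exp (-B)) / B * (n * ∫ x, ℓ x ∂ν) + log δ}) :=
        (ofReal_measureReal (measure_ne_top _ _)).symm
    _ ≤ ENNReal.ofReal δ := ENNReal.ofReal_le_ofReal <| by
        simpa only [exp_log hδ] using measureReal_sum_le_le_exp hB hℓ hbd n (log δ)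

end Chernoff

lemma ofReal_one_sub_le_measure_forall_of_weights {α ι : Type*} [MeasurableSpace α] [Countable ι]
    (μ : Measure α) [IsProbabilityMeasure μ] (P : ι → α → Prop) {w : ι → ℝ}
    (hw : ∀ i, 0 ≤ w i) (hw_sum : ∑' i, w i = 1) {ξ : ℝ} (hξ : 0 ≤ ξ)
    (h : ∀ i, 0 < w i → μ {a | ¬ P i a} ≤ ENNReal.ofReal (w i * ξ)) :
    ENNReal.ofReal (1 - ξ) ≤ μ {a | ∀ i, 0 < w i → P i a} := by
  set A : ι → Set α := fun i => {a | 0 < w i ∧ ¬ P i a}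
  have hA : ∀ i, μ (A i) ≤ ENNReal.ofReal (w i * ξ) := fun i => by
    by_cases hwi : 0 < w i
    · exact (measure_mono fun a ha => ha.2).trans (h i hwi)
    · simp [A, hwi]
  have hsummable : Summable w := by
    by_contra hns
    simp [tsum_eq_zero_of_not_summable hns] at hw_sum
  have hunion : μ (⋃ i, A i) ≤ ENNReal.ofReal ξ := calc
    μ (⋃ i, A i) ≤ ∑' i, ENNReal.ofReal (w i * ξ) :=
        (measure_iUnion_le A).trans (ENNReal.tsum_le_tsum hA)
    _ = ENNReal.ofReal ξ := by
        rw [← ENNReal.ofReal_tsum_of_nonneg (fun i => mul_nonneg (hw i) hξ)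
          (hsummable.mul_right ξ), tsum_mul_right, hw_sum, one_mul]
  have hgood : (⋃ i, A i)ᶜ = {a | ∀ i, 0 < w i → P i a} := by
    ext a
    simp [A]
  rw [← hgood, ENNReal.ofReal_sub _ hξ, ENNReal.ofReal_one, ← measure_univ (μ := μ)]
  exact tsub_le_iff_left.2 <| (measure_univ_le_add_compl _).trans (by gcongr)

theorem pac_bound_point_estimates_general
    {X : Type*} [MeasurableSpace X]
    (ν : Measure X) [IsProbabilityMeasure ν]
    {Θ : Type*} [MeasurableSpace Θ]
    (p : X → Θ → ℝ) (hp_meas : Measurable (Function.uncurry p))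
    (B : ℝ) (hB : 0 < B)
    (hbound : ∀ θ, ∀ᵐ x ∂ν, Real.exp (-B) ≤ p x θ ∧ p x θ ≤ 1)
    (S : Set Θ) (hS : S.Countable)
    (w : Θ → ℝ) (hw_nonneg : ∀ θ ∈ S, 0 ≤ w θ)
    (hw_sum : ∑' θ : S, w θ = 1)
    (ξ : ℝ) (hξ : 0 < ξ) (n : ℕ) (hn : 1 ≤ n) :
    ENNReal.ofReal (1 - ξ) ≤
      (Measure.pi fun _ : Fin n => ν)
        {D : Fin n → X | ∀ θ ∈ S, 0 < w θ →
          risk p ν θ ≤ (B / (1 - Real.exp (-B))) *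
            (empRisk p n D θ - (Real.log (w θ) + Real.log ξ) / n)} := by
  have : Countable S := hS.to_subtype
  have hloss_meas (θ : Θ) : AEMeasurable (fun x => -log (p x θ)) ν :=
    (hp_meas.comp (measurable_id.prodMk measurable_const)).log.neg.aemeasurable
  have hloss_bd (θ : Θ) : ∀ᵐ x ∂ν, -log (p x θ) ∈ Set.Icc 0 B :=
    (hbound θ).mono fun _ hx => neg_log_mem_Icc_of_exp_neg_le hx.1 hx.2
  refine (ofReal_one_sub_le_measure_forall_of_weights (Measure.pi fun _ : Fin n => ν)
    (fun (θ : S) D => risk p ν θ ≤ B / (1 - exp (-B)) *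
      (empRisk p n D θ - (log (w θ) + log ξ) / n))
    (fun θ => hw_nonneg θ θ.2) hw_sum hξ.le fun θ hθ => ?_).trans_eq (by simp only [Subtype.forall])
  rw [← log_mul hθ.ne' hξ.ne']
  exact measure_not_le_empirical_bound_le hB (hloss_meas θ) (hloss_bd θ) hn (mul_pos hθ hξ)

/-- PAC bound for point estimates under a countable discrete
prior `π_F = Σ_{θ'∈S} w_{θ'} δ_{θ'}`: with `ν^n`-probability at least `1 − ξ`
over an i.i.d. sample `D`, simultaneously for all `θ ∈ S` with `w_θ > 0`,
`L(θ) ≤ (B/(1−e^{−B})) (L̂(D,θ) − (ln w_θ + ln ξ)/n)`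
(here `KL(δ_θ, π_F) = −ln w_θ`). -/
theorem pac_bound_point_estimates
    {X : Type*} [MeasurableSpace X] (μ : Measure X) [SigmaFinite μ]
    (ν : Measure X) [IsProbabilityMeasure ν]
    {Θ : Type*} [MeasurableSpace Θ]
    (p : X → Θ → ℝ) (hp_meas : Measurable (Function.uncurry p))
    (hp_dens : ∀ θ, IsProbabilityMeasure
      (μ.withDensity (fun x => ENNReal.ofReal (p x θ))))
    (B : ℝ) (hB : 0 < B)
    (hbound : ∀ θ, ∀ᵐ x ∂ν, Real.exp (-B) ≤ p x θ ∧ p x θ ≤ 1)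
    (S : Set Θ) (hS : S.Countable)
    (w : Θ → ℝ) (hw_nonneg : ∀ θ ∈ S, 0 ≤ w θ)
    (hw_sum : ∑' θ : S, w θ = 1)
    (ξ : ℝ) (hξ : 0 < ξ) (hξ1 : ξ < 1) (n : ℕ) (hn : 1 ≤ n) :
    ENNReal.ofReal (1 - ξ) ≤
      (Measure.pi fun _ : Fin n => ν)
        {D : Fin n → X | ∀ θ ∈ S, 0 < w θ →
          risk p ν θ ≤ (B / (1 - Real.exp (-B))) *
            (empRisk p n D θ - (Real.log (w θ) + Real.log ξ) / n)} :=
  pac_bound_point_estimates_general ν p hp_meas B hB hbound S hS w hw_nonneg hw_sum ξ hξ n hn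

end
end

section
/- Second-order PAC-Bayes bound for ensembles: Let S ⊆ Θ be countable and π_F = Σ_{θ′ ∈ S} w_{θ′} δ_{θ′} a discrete prior with weights w_{θ′} ≥ 0 summing to 1. Fix ξ ∈ (0,1), n ≥ 1, E ≥ 1, and set A = (1/2)((B+1)/(1 − e^{−B−1}) − 1). For parameters θ_1, …, θ_E ∈ S with w_{θ_j} > 0, let ρ_E = (1/E) Σ_{j=1}^E δ_{θ_j} and p_E(x) = (1/E) Σ_{j=1}^E p(x|θ_j). Then, with ν^n-probability at least 1 − ξ over the draw of an i.i.d. sample D = (x_1, …, x_n) from ν, simultaneously for all such tuples (θ_1, …, θ_E): L̄(ρ_E) ≤ ((B+1)/(1 − e^{−B−1})) · ( (1/E) Σ_{j=1}^E L̂(D, θ_j) − V̂_E(D, θ_1, …, θ_E) − ( (1/E) Σ_{j=1}^E ln w_{θ_j} + ln ξ )/n ) + A, where V̂_E(D, θ_1, …, θ_E) = (1/(nE)) Σ_{i=1}^n Σ_{j=1}^E (p(x_i|θ_j) − p_E(x_i))² / (2 (max_{1≤k≤E} p(x_i|θ_k))²). -/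
/-!
Write `g_θ = 1 - p(·|θ) ∈ [0, 1]` for the linearised loss. The chord of `exp` on `[-1, 0]`
gives `E exp(-g) ≤ 1 - k E g` with `k = 1 - e⁻¹`, hence `E exp(E g - ψ - g) ≤ 1` for an absolute
constant `ψ`; the same holds for the product over an i.i.d. sample, and Markov's inequality with
a union bound weighted by the prior `w` shows that with probability `1 - ξ` every `θ ∈ S` has
`E g_θ ≤ (1/n) Σ_i g_θ(x_i) + ψ - (log w_θ + log ξ)/n`.

On the population side the chord of `log` on `[e^{-B-1}, 1]` gives `-log p_E ≤ C (1 - p_E)` with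
`C = (B+1)/(1 - e^{-B-1})`, and `1 - p_E` is the average of the `g_{θ_j}`. On the sample side
`1 - q ≤ -log q` at the ensemble mean, together with the second-order bound
`log x - log y ≤ (x - y)/y - (x - y)²/(2M²)` for `x, y ≤ M` summed over the members, turns
`Σ_j g_{θ_j}(x_i)` into the log-losses minus the variance term. Finally `C ψ ≤ A`, because
`ψ ≤ e⁻¹/2` and `C k ≥ 1`.
-/

open MeasureTheory Real
open scoped ENNReal

noncomputable section

/-- The ensemble predictive density `p_E(x) = (1/E) Σ_j p(x|θ_j)`: this is the
predictive density of the uniform mixture of Diracs `ρ_E = (1/E) Σ_j δ_{θ_j}`. -/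
def ensemblePredictive {X Θ : Type*} (p : X → Θ → ℝ) (E : ℕ)
    (θs : Fin E → Θ) (x : X) : ℝ :=
  (1 / (E : ℝ)) * ∑ j : Fin E, p x (θs j)

/-- Expected code length of the ensemble: `L̄(ρ_E) = ∫ −ln p_E(x) dν(x)`. -/
def ensembleCodeLength {X Θ : Type*} [MeasurableSpace X] (p : X → Θ → ℝ)
    (ν : Measure X) (E : ℕ) (θs : Fin E → Θ) : ℝ :=
  ∫ x, -Real.log (ensemblePredictive p E θs x) ∂ν

/-- The empirical variance (diversity) term of the ensemble:
`V̂_E(D,θ_1,…,θ_E) = (1/(nE)) Σ_i Σ_j (p(x_i|θ_j) − p_E(x_i))² / (2 (max_k p(x_i|θ_k))²)`. -/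
def ensembleEmpVariance {X Θ : Type*} (p : X → Θ → ℝ) (n : ℕ) (D : Fin n → X)
    (E : ℕ) (θs : Fin E → Θ) : ℝ :=
  (1 / ((n : ℝ) * E)) * ∑ i : Fin n, ∑ j : Fin E,
    (p (D i) (θs j) - ensemblePredictive p E θs (D i)) ^ 2 /
      (2 * (⨆ k : Fin E, p (D i) (θs k)) ^ 2)

lemma exp_neg_le_one_sub_mul_s17 {t : ℝ} (h0 : 0 ≤ t) (h1 : t ≤ 1) :
    exp (-t) ≤ 1 - (1 - exp (-1)) * t := by
  have h := convexOn_exp.2 (Set.mem_univ (-1)) (Set.mem_univ 0) h0 (sub_nonneg.2 h1)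
    (add_sub_cancel t 1)
  simp only [smul_eq_mul, mul_neg, mul_one, mul_zero, add_zero, exp_zero] at h
  linarith

lemma neg_log_le_mul_one_sub {a q : ℝ} (ha0 : 0 < a) (ha1 : a < 1) (haq : a ≤ q) (hq : q ≤ 1) :
    -log q ≤ -log a / (1 - a) * (1 - q) := by
  set s := (1 - q) / (1 - a)
  have hs0 : 0 ≤ s := div_nonneg (by linarith) (by linarith)
  have hs1 : s ≤ 1 := (div_le_one (by linarith)).2 (by linarith)
  have hq_eq : s * a + (1 - s) * 1 = q := by
    have : 1 - a ≠ 0 := by linarith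
    simp only [s]; field_simp; ring
  have h := strictConcaveOn_log_Ioi.concaveOn.2 (Set.mem_Ioi.2 ha0) (Set.mem_Ioi.2 one_pos)
    hs0 (sub_nonneg.2 hs1) (add_sub_cancel s 1)
  simp only [smul_eq_mul, hq_eq, log_one, mul_zero, add_zero] at h
  have : -log a / (1 - a) * (1 - q) = s * -log a := by simp only [s]; ring
  linarith

lemma add_log_one_sub_mul_le {k m : ℝ} (hk : 0 < k) (hkm : 0 < 1 - k * m) :
    m + log (1 - k * m) ≤ 1 / k - 1 + log k := by
  have h := log_le_sub_one_of_pos (div_pos hkm hk)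
  rw [log_div hkm.ne' hk.ne'] at h
  have : (1 - k * m) / k - 1 = 1 / k - m - 1 := by field_simp
  linarith

/-- `ψ = max_m (m + log (1 - k m)) = 1/k - 1 + log k` with `k = 1 - e⁻¹`: the log-moment bound
of a loss with values in `[0, 1]`. -/
def lossMomentConst : ℝ := 1 / (1 - exp (-1)) - 1 + log (1 - exp (-1))

lemma lossMomentConst_le : lossMomentConst ≤ exp (-1) / 2 := by
  set t := exp (-1)
  have ht : t = (exp 1)⁻¹ := exp_neg 1
  have ht_lb : 0.36787944 < t := by
    rw [ht, lt_inv_comm₀ (by norm_num) (exp_pos 1)]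
    linarith [exp_one_lt_d9]
  have ht_ub : t < 0.36787945 := by
    rw [ht, inv_lt_comm₀ (exp_pos 1) (by norm_num)]
    linarith [exp_one_gt_d9]
  have hk : 0 < 1 - t := by linarith
  have hlog : log (1 - t) ≤ -(2 / 5) := by
    have h35 : 1.2 ^ 3 ≤ exp (3 / 5) := by
      rw [show (3 / 5 : ℝ) = (3 : ℕ) * (1 / 5) by norm_num, exp_nat_mul]
      gcongr
      linarith [add_one_le_exp (1 / 5 : ℝ)]
    -- `(1 - t) e = e - 1 < 1.2 ^ 3 ≤ exp (3 / 5)`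
    rw [log_le_iff_le_exp hk, show -(2 / 5 : ℝ) = 3 / 5 + -1 by norm_num, exp_add, exp_neg 1,
      le_mul_inv_iff₀ (exp_pos 1), sub_mul, ht, inv_mul_cancel₀ (exp_pos 1).ne']
    linarith [exp_one_lt_d9]
  have hinv : 1 / (1 - t) ≤ 1 + 2 / 5 + t / 2 := by
    rw [div_le_iff₀ hk]; nlinarith
  unfold lossMomentConst
  linarith

lemma one_sub_exp_neg_le_mul {x : ℝ} (hx : 1 ≤ x) : 1 - exp (-x) ≤ x * (1 - exp (-1)) := by
  have htangent : exp (-1) * (2 - x) ≤ exp (-x) := by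
    rw [show -x = -1 + (1 - x) by ring, exp_add]
    gcongr
    linarith [add_one_le_exp (1 - x)]
  have he : exp (-1) < 1 / 2 := by
    rw [exp_neg, inv_lt_comm₀ (exp_pos 1) (by norm_num)]
    linarith [exp_one_gt_d9]
  nlinarith

lemma mul_lossMomentConst_le {B : ℝ} (hB : 0 ≤ B) :
    (B + 1) / (1 - exp (-B - 1)) * lossMomentConst ≤
      1 / 2 * ((B + 1) / (1 - exp (-B - 1)) - 1) := by
  set C := (B + 1) / (1 - exp (-B - 1))
  have hden : 0 < 1 - exp (-B - 1) := by
    linarith [exp_lt_one_iff.2 (by linarith : -B - 1 < 0)]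
  have hC : 0 ≤ C := div_nonneg (by linarith) hden.le
  have hCk : 1 ≤ C * (1 - exp (-1)) := by
    rw [div_mul_eq_mul_div, le_div_iff₀ hden, one_mul]
    have := one_sub_exp_neg_le_mul (x := B + 1) (by linarith)
    rwa [neg_add'] at this
  nlinarith [mul_le_mul_of_nonneg_left lossMomentConst_le hC]

lemma integral_one_div_sub_div_sq (y x M : ℝ) (hy : y ≠ 0) (hM : M ≠ 0) :
    ∫ t in y..x, (1 / y - (t - y) / M ^ 2) = (x - y) / y - (x - y) ^ 2 / (2 * M ^ 2) := by
  rw [intervalIntegral.integral_sub intervalIntegrable_const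
    ((by fun_prop : Continuous fun t : ℝ => (t - y) / M ^ 2).intervalIntegrable _ _),
    intervalIntegral.integral_comp_sub_right (fun u => u / M ^ 2)]
  simp only [intervalIntegral.integral_const, intervalIntegral.integral_div, integral_id,
    smul_eq_mul]
  field_simp
  ring

lemma one_div_sub_sub_one_div {t y M : ℝ} (ht : t ≠ 0) (hy : y ≠ 0) (hM : M ≠ 0) :
    1 / y - (t - y) / M ^ 2 - 1 / t = (t - y) * (M ^ 2 - t * y) / (t * y * M ^ 2) := by
  field_simp
  ring

lemma log_sub_log_le {x y M : ℝ} (hx : 0 < x) (hy : 0 < y) (hxM : x ≤ M) (hyM : y ≤ M) :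
    log x - log y ≤ (x - y) / y - (x - y) ^ 2 / (2 * M ^ 2) := by
  have hM : 0 < M := hx.trans_le hxM
  -- Both sides are integrals from `y` to `x`: of `1 / t`, and of its tangent at `y` bent down by
  -- `(t - y) / M²`, which lies above `1 / t` for `t ≥ y` and below it for `t ≤ y` since `t y ≤ M²`.
  rw [← log_div hx.ne' hy.ne', ← integral_one_div_of_pos hy hx,
    ← integral_one_div_sub_div_sq y x M hy.ne' hM.ne']
  have hquad : Continuous fun t : ℝ => 1 / y - (t - y) / M ^ 2 := by fun_prop
  rcases le_total y x with hyx | hxy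
  · refine intervalIntegral.integral_mono_on hyx
      (intervalIntegral.intervalIntegrable_one_div (fun t ht => ?_) continuousOn_id)
      (hquad.intervalIntegrable _ _) fun t ht => ?_
    · rw [Set.uIcc_of_le hyx] at ht; exact (hy.trans_le ht.1).ne'
    have ht0 : 0 < t := hy.trans_le ht.1
    rw [← sub_nonneg, one_div_sub_sub_one_div ht0.ne' hy.ne' hM.ne']
    have hty : t * y ≤ M * M := mul_le_mul (ht.2.trans hxM) hyM hy.le hM.le
    exact div_nonneg (mul_nonneg (by linarith [ht.1]) (by nlinarith)) (by positivity)
  · rw [intervalIntegral.integral_symm x y, intervalIntegral.integral_symm x y, neg_le_neg_iff]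
    refine intervalIntegral.integral_mono_on hxy (hquad.intervalIntegrable _ _)
      (intervalIntegral.intervalIntegrable_one_div (fun t ht => ?_) continuousOn_id) fun t ht => ?_
    · rw [Set.uIcc_of_le hxy] at ht; exact (hx.trans_le ht.1).ne'
    have ht0 : 0 < t := hx.trans_le ht.1
    rw [← sub_nonpos, one_div_sub_sub_one_div ht0.ne' hy.ne' hM.ne']
    have hty : t * y ≤ M * M := mul_le_mul (ht.2.trans hyM) hyM hy.le hM.le
    exact div_nonpos_of_nonpos_of_nonneg
      (mul_nonpos_of_nonpos_of_nonneg (by linarith [ht.2]) (by nlinarith)) (by positivity)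

lemma sum_one_sub_le_sum_neg_log_sub {ι : Type*} [Fintype ι] (a : ι → ℝ) (ha : ∀ j, 0 < a j) :
    ∑ j, (1 - a j) ≤ ∑ j, -log (a j) -
      ∑ j, (a j - 1 / (Fintype.card ι : ℝ) * ∑ k, a k) ^ 2 / (2 * (⨆ k, a k) ^ 2) := by
  rcases isEmpty_or_nonempty ι with hι | hι
  · simp
  set M := ⨆ k, a k
  set abar := 1 / (Fintype.card ι : ℝ) * ∑ k, a k
  have hcard : (0 : ℝ) < Fintype.card ι := by exact_mod_cast Fintype.card_pos
  have haM : ∀ j, a j ≤ M := le_ciSup (Set.finite_range a).bddAbove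
  have habar : 0 < abar :=
    mul_pos (by positivity) (Finset.sum_pos (fun j _ => ha j) Finset.univ_nonempty)
  have habarM : abar ≤ M := by
    calc abar ≤ 1 / (Fintype.card ι : ℝ) * ∑ _k : ι, M :=
          mul_le_mul_of_nonneg_left (Finset.sum_le_sum fun k _ => haM k) (by positivity)
      _ = M := by simp only [Finset.sum_const, Finset.card_univ, nsmul_eq_mul]; field_simp
  have hsum_card : ∀ c : ℝ, ∑ _j : ι, c = Fintype.card ι * c := by simp
  have hcentered : ∑ j, (a j - abar) = 0 := by
    rw [Finset.sum_sub_distrib, hsum_card]; simp only [abar]; field_simp; ring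
  have hsecond : ∑ j, (log (a j) - log abar) ≤
      ∑ j, ((a j - abar) / abar - (a j - abar) ^ 2 / (2 * M ^ 2)) :=
    Finset.sum_le_sum fun j _ => log_sub_log_le (ha j) habar (haM j) habarM
  have hfirst : 1 - abar ≤ -log abar := by linarith [log_le_sub_one_of_pos habar]
  rw [Finset.sum_sub_distrib, Finset.sum_sub_distrib, ← Finset.sum_div, hcentered,
    zero_div, hsum_card] at hsecond
  rw [Finset.sum_sub_distrib, hsum_card, Finset.sum_neg_distrib]
  have : ∑ j, a j = Fintype.card ι * abar := by simp only [abar]; field_simp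
  linarith [mul_le_mul_of_nonneg_left hfirst hcard.le]

lemma mean_mean_eq {m k : ℕ} (f : Fin m → Fin k → ℝ) :
    1 / (k : ℝ) * ∑ j, 1 / (m : ℝ) * ∑ i, f i j = 1 / ((m : ℝ) * k) * ∑ i, ∑ j, f i j := by
  rw [← Finset.mul_sum, Finset.sum_comm, ← mul_assoc, one_div_mul_one_div, mul_comm (k : ℝ)]

def empLoss {X Θ : Type*} (p : X → Θ → ℝ) (n : ℕ) (D : Fin n → X) (θ : Θ) : ℝ :=
  1 / (n : ℝ) * ∑ i, (1 - p (D i) θ)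

section Ensemble

variable {X Θ : Type*} {p : X → Θ → ℝ}

lemma ensemblePredictive_mem_Icc {E : ℕ} (hE : E ≠ 0) (θs : Fin E → Θ) {x : X} {a b : ℝ}
    (h : ∀ j, a ≤ p x (θs j) ∧ p x (θs j) ≤ b) :
    a ≤ ensemblePredictive p E θs x ∧ ensemblePredictive p E θs x ≤ b := by
  have hE' : (E : ℝ) ≠ 0 := Nat.cast_ne_zero.2 hE
  have hmean : ∀ c : ℝ, 1 / (E : ℝ) * ∑ _j : Fin E, c = c := fun c => by
    simp only [Finset.sum_const, Finset.card_univ, Fintype.card_fin, nsmul_eq_mul]; field_simp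
  unfold ensemblePredictive
  constructor
  · calc a = 1 / (E : ℝ) * ∑ _j : Fin E, a := (hmean a).symm
      _ ≤ _ := by gcongr with j; exact (h j).1
  · calc _ ≤ 1 / (E : ℝ) * ∑ _j : Fin E, b := by gcongr with j; exact (h j).2
      _ = b := hmean b

lemma one_sub_ensemblePredictive {E : ℕ} (hE : E ≠ 0) (θs : Fin E → Θ) (x : X) :
    1 - ensemblePredictive p E θs x = 1 / (E : ℝ) * ∑ j, (1 - p x (θs j)) := by
  have hE' : (E : ℝ) ≠ 0 := Nat.cast_ne_zero.2 hE
  simp only [ensemblePredictive, Finset.sum_sub_distrib, Finset.sum_const, Finset.card_univ,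
    Fintype.card_fin, nsmul_eq_mul]
  field_simp

lemma mean_empLoss_le {n E : ℕ} (D : Fin n → X) (θs : Fin E → Θ)
    (hp : ∀ i j, 0 < p (D i) (θs j)) :
    1 / (E : ℝ) * ∑ j, empLoss p n D (θs j) ≤
      1 / (E : ℝ) * ∑ j, empRisk p n D (θs j) - ensembleEmpVariance p n D E θs := by
  have hpoint : ∀ i, ∑ j, (1 - p (D i) (θs j)) ≤ ∑ j, -log (p (D i) (θs j)) -
      ∑ j, (p (D i) (θs j) - ensemblePredictive p E θs (D i)) ^ 2 /
        (2 * (⨆ k, p (D i) (θs k)) ^ 2) := by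
    intro i
    simpa only [Fintype.card_fin, ensemblePredictive] using sum_one_sub_le_sum_neg_log_sub _ (hp i)
  have hsum := Finset.sum_le_sum fun i (_ : i ∈ Finset.univ) => hpoint i
  rw [Finset.sum_sub_distrib] at hsum
  simp only [empLoss, empRisk, ensembleEmpVariance, mean_mean_eq]
  rw [← mul_sub]
  exact mul_le_mul_of_nonneg_left hsum (by positivity)

end Ensemble

def meanLoss {X Θ : Type*} [MeasurableSpace X] (ν : Measure X) (p : X → Θ → ℝ) (θ : Θ) : ℝ :=
  ∫ x, (1 - p x θ) ∂ν

section Population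

variable {X Θ : Type*} [MeasurableSpace X] {ν : Measure X} {p : X → Θ → ℝ}

lemma integral_neg_log_le [IsFiniteMeasure ν] {f : X → ℝ} {a : ℝ} (ha0 : 0 < a) (ha1 : a < 1)
    (hf : AEMeasurable f ν) (hbound : ∀ᵐ x ∂ν, a ≤ f x ∧ f x ≤ 1) :
    ∫ x, -log (f x) ∂ν ≤ -log a / (1 - a) * ∫ x, (1 - f x) ∂ν := by
  rw [← integral_const_mul]
  refine integral_mono_ae (.of_mem_Icc 0 (-log a) (measurable_log.comp_aemeasurable hf).neg ?_)
    ((Integrable.of_mem_Icc 0 1 (aemeasurable_const.sub hf) ?_).const_mul _) ?_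
  all_goals filter_upwards [hbound] with x hx
  · exact ⟨neg_nonneg.2 (log_nonpos (ha0.trans_le hx.1).le hx.2),
      neg_le_neg (log_le_log ha0 hx.1)⟩
  · exact ⟨sub_nonneg.2 hx.2, by dsimp; linarith [hx.1]⟩
  · exact neg_log_le_mul_one_sub ha0 ha1 hx.1 hx.2

lemma ensembleCodeLength_le [IsProbabilityMeasure ν] {a : ℝ} (ha0 : 0 < a) (ha1 : a < 1)
    {E : ℕ} (hE : E ≠ 0) (θs : Fin E → Θ) (hp : ∀ j, AEMeasurable (fun x => p x (θs j)) ν)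
    (hbound : ∀ j, ∀ᵐ x ∂ν, a ≤ p x (θs j) ∧ p x (θs j) ≤ 1) :
    ensembleCodeLength p ν E θs ≤ -log a / (1 - a) * (1 / (E : ℝ) * ∑ j, meanLoss ν p (θs j)) := by
  have hint : ∀ j, Integrable (fun x => 1 - p x (θs j)) ν := fun j =>
    .of_mem_Icc 0 1 (aemeasurable_const.sub (hp j)) <| (hbound j).mono fun x hx =>
      ⟨sub_nonneg.2 hx.2, by linarith [hx.1]⟩
  have hmeanLoss : ∫ x, (1 - ensemblePredictive p E θs x) ∂ν =
      1 / (E : ℝ) * ∑ j, meanLoss ν p (θs j) := by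
    simp only [one_sub_ensemblePredictive hE, integral_const_mul,
      integral_finsetSum _ fun j _ => hint j, meanLoss]
  rw [← hmeanLoss]
  refine integral_neg_log_le ha0 ha1 ?_ ?_
  · exact (Finset.aemeasurable_fun_sum _ fun j _ => hp j).const_mul _
  · filter_upwards [ae_all_iff.2 hbound] with x hx
    exact ensemblePredictive_mem_Icc hE θs hx

end Population

section Concentration

variable {X : Type*} [MeasurableSpace X] {ν : Measure X}

lemma integrable_exp_sub [IsFiniteMeasure ν] {g : X → ℝ} (hg : AEMeasurable g ν)
    (hg0 : ∀ᵐ x ∂ν, 0 ≤ g x) (c : ℝ) : Integrable (fun x => exp (c - g x)) ν :=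
  .of_mem_Icc 0 (exp c) (measurable_exp.comp_aemeasurable (aemeasurable_const.sub hg)) <|
    hg0.mono fun x hx => ⟨(exp_pos _).le, exp_le_exp.2 (by linarith)⟩

lemma integral_exp_integral_sub_sub_le_one [IsProbabilityMeasure ν] {g : X → ℝ}
    (hg : AEMeasurable g ν) (hg01 : ∀ᵐ x ∂ν, 0 ≤ g x ∧ g x ≤ 1) :
    ∫ x, exp ((∫ y, g y ∂ν) - lossMomentConst - g x) ∂ν ≤ 1 := by
  set m := ∫ y, g y ∂ν
  set k := 1 - exp (-1)
  have hk0 : 0 < k := by linarith [exp_lt_one_iff.2 (by norm_num : (-1 : ℝ) < 0)]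
  have hk1 : k < 1 := by linarith [exp_pos (-1)]
  have hgint : Integrable g ν := .of_mem_Icc 0 1 hg hg01
  have hm0 : 0 ≤ m := integral_nonneg_of_ae (hg01.mono fun x hx => hx.1)
  have hm1 : m ≤ 1 := by
    simpa using integral_mono_ae hgint (integrable_const 1) (hg01.mono fun x hx => hx.2)
  have hchord : ∫ x, exp (-g x) ∂ν ≤ 1 - k * m := calc
    ∫ x, exp (-g x) ∂ν ≤ ∫ x, (1 - k * g x) ∂ν :=
      integral_mono_ae (by simpa using integrable_exp_sub hg (hg01.mono fun x hx => hx.1) 0)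
        ((integrable_const 1).sub (hgint.const_mul k))
        (hg01.mono fun x hx => exp_neg_le_one_sub_mul_s17 hx.1 hx.2)
    _ = 1 - k * m := by
      rw [integral_sub (integrable_const 1) (hgint.const_mul k), integral_const_mul]
      simp [m]
  have hkm : 0 < 1 - k * m := by nlinarith
  have htangent : exp m * (1 - k * m) ≤ exp lossMomentConst := by
    rw [← exp_log hkm, ← exp_add]
    exact exp_le_exp.2 (add_log_one_sub_mul_le hk0 hkm)
  calc ∫ x, exp (m - lossMomentConst - g x) ∂ν
        = exp (m - lossMomentConst) * ∫ x, exp (-g x) ∂ν := by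
        rw [← integral_const_mul]
        simp only [← exp_add, sub_eq_add_neg]
    _ ≤ exp (m - lossMomentConst) * (1 - k * m) := by gcongr
    _ ≤ 1 := by
      rw [exp_sub, div_mul_eq_mul_div, div_le_one (exp_pos _)]
      exact htangent

lemma integral_pi_prod_exp_integral_sub_sub_le_one [IsProbabilityMeasure ν] {ι : Type*}
    [Fintype ι] {g : X → ℝ} (hg : AEMeasurable g ν) (hg01 : ∀ᵐ x ∂ν, 0 ≤ g x ∧ g x ≤ 1) :
    ∫ D, ∏ i : ι, exp ((∫ y, g y ∂ν) - lossMomentConst - g (D i)) ∂(Measure.pi fun _ => ν) ≤ 1 := by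
  rw [integral_fintype_prod_eq_pow fun x => exp ((∫ y, g y ∂ν) - lossMomentConst - g x)]
  exact pow_le_one₀ (integral_nonneg fun x => (exp_pos _).le)
    (integral_exp_integral_sub_sub_le_one hg hg01)

end Concentration

lemma ofReal_one_sub_le_measure_forall_mul_lt_one {Ω ι : Type*} [MeasurableSpace Ω] [Countable ι]
    (μ : Measure Ω) [IsProbabilityMeasure μ] {Z : ι → Ω → ℝ} (hZ0 : ∀ i, 0 ≤ᵐ[μ] Z i)
    (hZint : ∀ i, Integrable (Z i) μ) (hZ1 : ∀ i, ∫ ω, Z i ω ∂μ ≤ 1) {w : ι → ℝ}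
    (hw0 : ∀ i, 0 ≤ w i) (hw1 : ∑' i, w i = 1) {ξ : ℝ} (hξ : 0 ≤ ξ) :
    ENNReal.ofReal (1 - ξ) ≤ μ {ω | ∀ i, ξ * w i * Z i ω < 1} := by
  have hmarkov : ∀ i, μ {ω | 1 ≤ ξ * w i * Z i ω} ≤ ENNReal.ofReal (ξ * w i) := by
    intro i
    have hξw : 0 ≤ ξ * w i := mul_nonneg hξ (hw0 i)
    have h := mul_meas_ge_le_integral_of_nonneg ((hZ0 i).mono fun ω hω => mul_nonneg hξw hω)
      ((hZint i).const_mul (ξ * w i)) 1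
    rw [one_mul, integral_const_mul] at h
    rw [← ofReal_measureReal]
    exact ENNReal.ofReal_le_ofReal (h.trans (mul_le_of_le_one_right hξw (hZ1 i)))
  have hsummable : Summable w := by
    by_contra h
    rw [tsum_eq_zero_of_not_summable h] at hw1
    exact zero_ne_one hw1
  have hunion : μ (⋃ i, {ω | 1 ≤ ξ * w i * Z i ω}) ≤ ENNReal.ofReal ξ := calc
    _ ≤ ∑' i, μ {ω | 1 ≤ ξ * w i * Z i ω} := measure_iUnion_le _
    _ ≤ ∑' i, ENNReal.ofReal (ξ * w i) := ENNReal.tsum_le_tsum hmarkov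
    _ = ENNReal.ofReal ξ := by
      rw [← ENNReal.ofReal_tsum_of_nonneg (fun i => mul_nonneg hξ (hw0 i))
        (hsummable.mul_left ξ), tsum_mul_left, hw1, mul_one]
  have hcompl : {ω | ∀ i, ξ * w i * Z i ω < 1} = (⋃ i, {ω | 1 ≤ ξ * w i * Z i ω})ᶜ := by
    ext; simp
  rw [hcompl, ENNReal.ofReal_sub _ hξ, ENNReal.ofReal_one, ← measure_univ (μ := μ)]
  calc μ Set.univ - ENNReal.ofReal ξ ≤ μ Set.univ - μ (⋃ i, {ω | 1 ≤ ξ * w i * Z i ω}) :=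
        tsub_le_tsub_left hunion _
    _ ≤ _ := tsub_le_iff_left.2 (measure_univ_le_add_compl _)

lemma le_of_mul_prod_exp_lt_one {n : ℕ} (hn : n ≠ 0) {m ψ w ξ : ℝ} (g : Fin n → ℝ) (hw : 0 < w)
    (hξ : 0 < ξ) (h : ξ * w * ∏ i, exp (m - ψ - g i) < 1) :
    m ≤ 1 / (n : ℝ) * ∑ i, g i + ψ - (log w + log ξ) / n := by
  have hn' : (0 : ℝ) < n := by positivity
  rw [← exp_sum, Finset.sum_sub_distrib, Finset.sum_const, Finset.card_univ, Fintype.card_fin,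
    nsmul_eq_mul] at h
  have hlog := (log_lt_log_iff (by positivity) one_pos).2 h
  rw [log_mul (by positivity) (exp_pos _).ne', log_mul hξ.ne' hw.ne', log_exp, log_one] at hlog
  rw [← sub_nonneg]
  have : 1 / (n : ℝ) * ∑ i, g i + ψ - (log w + log ξ) / n - m =
      1 / n * (∑ i, g i + n * ψ - (log w + log ξ) - n * m) := by
    field_simp
  rw [this]
  exact mul_nonneg (by positivity) (by linarith)

lemma ofReal_one_sub_le_measure_forall_meanLoss_le {X Θ : Type*} [MeasurableSpace X]
    (ν : Measure X) [IsProbabilityMeasure ν] {p : X → Θ → ℝ} {S : Set Θ} (hS : S.Countable)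
    (hp : ∀ θ ∈ S, AEMeasurable (fun x => p x θ) ν)
    (hbound : ∀ θ ∈ S, ∀ᵐ x ∂ν, 0 ≤ p x θ ∧ p x θ ≤ 1) {w : Θ → ℝ} (hw0 : ∀ θ ∈ S, 0 ≤ w θ)
    (hw1 : ∑' θ : S, w θ = 1) {ξ : ℝ} (hξ : 0 < ξ) {n : ℕ} (hn : n ≠ 0) :
    ENNReal.ofReal (1 - ξ) ≤ (Measure.pi fun _ : Fin n => ν) {D | ∀ θ ∈ S, 0 < w θ →
      meanLoss ν p θ ≤ empLoss p n D θ + lossMomentConst - (log (w θ) + log ξ) / n} := by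
  have : Countable S := hS.to_subtype
  have hloss : ∀ θ : S, ∀ᵐ x ∂ν, 0 ≤ 1 - p x θ ∧ 1 - p x θ ≤ 1 := fun θ =>
    (hbound θ θ.2).mono fun x hx => ⟨sub_nonneg.2 hx.2, by linarith [hx.1]⟩
  have hmeas : ∀ θ : S, AEMeasurable (fun x => 1 - p x θ) ν := fun θ =>
    aemeasurable_const.sub (hp θ θ.2)
  refine (ofReal_one_sub_le_measure_forall_mul_lt_one (Measure.pi fun _ : Fin n => ν)
    (Z := fun (θ : S) D => ∏ i, exp (meanLoss ν p θ - lossMomentConst - (1 - p (D i) θ)))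
    (fun θ => .of_forall fun D => Finset.prod_nonneg fun i _ => (exp_pos _).le)
    (fun θ => .fintype_prod fun i =>
      integrable_exp_sub (hmeas θ) ((hloss θ).mono fun x hx => hx.1) _)
    (fun θ => integral_pi_prod_exp_integral_sub_sub_le_one (hmeas θ) (hloss θ))
    (fun θ => hw0 θ θ.2) hw1 hξ.le).trans (measure_mono fun D hD θ hθ hwθ => ?_)
  exact le_of_mul_prod_exp_lt_one hn _ hwθ hξ (hD ⟨θ, hθ⟩)

lemma ensembleCodeLength_le_of_forall_meanLoss_le {X Θ : Type*} [MeasurableSpace X]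
    {ν : Measure X} [IsProbabilityMeasure ν] {p : X → Θ → ℝ} {B : ℝ} (hB : 0 ≤ B) {n E : ℕ}
    (hE : E ≠ 0) (D : Fin n → X) (θs : Fin E → Θ) (hp : ∀ j, AEMeasurable (fun x => p x (θs j)) ν)
    (hbound : ∀ j, ∀ᵐ x ∂ν, exp (-B - 1) ≤ p x (θs j) ∧ p x (θs j) ≤ 1)
    (hD : ∀ i j, 0 < p (D i) (θs j)) (w : Θ → ℝ) (ξ : ℝ)
    (hmember : ∀ j, meanLoss ν p (θs j) ≤
      empLoss p n D (θs j) + lossMomentConst - (log (w (θs j)) + log ξ) / n) :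
    ensembleCodeLength p ν E θs ≤
      (B + 1) / (1 - exp (-B - 1)) * (1 / (E : ℝ) * ∑ j, empRisk p n D (θs j)
        - ensembleEmpVariance p n D E θs - (1 / (E : ℝ) * ∑ j, log (w (θs j)) + log ξ) / n)
      + 1 / 2 * ((B + 1) / (1 - exp (-B - 1)) - 1) := by
  set C := (B + 1) / (1 - exp (-B - 1))
  have ha1 : exp (-B - 1) < 1 := exp_lt_one_iff.2 (by linarith)
  have hC : -log (exp (-B - 1)) / (1 - exp (-B - 1)) = C := by rw [log_exp]; ring
  have hmean : 1 / (E : ℝ) * ∑ j, meanLoss ν p (θs j) ≤ 1 / (E : ℝ) * ∑ j, empLoss p n D (θs j)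
      + lossMomentConst - (1 / (E : ℝ) * ∑ j, log (w (θs j)) + log ξ) / n := calc
    _ ≤ 1 / (E : ℝ) * ∑ j,
          (empLoss p n D (θs j) + lossMomentConst - (log (w (θs j)) + log ξ) / n) := by
        gcongr with j; exact hmember j
    _ = _ := by
        have hE' : (E : ℝ) ≠ 0 := Nat.cast_ne_zero.2 hE
        simp only [Finset.sum_add_distrib, Finset.sum_sub_distrib, ← Finset.sum_div,
          Finset.sum_const, Finset.card_univ, Fintype.card_fin, nsmul_eq_mul]
        field_simp
  have hemp := mean_empLoss_le D θs hD
  calc ensembleCodeLength p ν E θs ≤ C * (1 / (E : ℝ) * ∑ j, meanLoss ν p (θs j)) :=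
        hC ▸ ensembleCodeLength_le (exp_pos _) ha1 hE θs hp hbound
    _ ≤ C * (1 / (E : ℝ) * ∑ j, empRisk p n D (θs j) - ensembleEmpVariance p n D E θs
          - (1 / (E : ℝ) * ∑ j, log (w (θs j)) + log ξ) / n + lossMomentConst) :=
        mul_le_mul_of_nonneg_left (by linarith) (div_nonneg (by linarith) (by linarith))
    _ ≤ _ := by
        rw [mul_add]
        linarith [mul_lossMomentConst_le hB]

theorem second_order_pac_bayes_bound_ensembles_general
    {X : Type*} [MeasurableSpace X]
    (ν : Measure X) [IsProbabilityMeasure ν]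
    {Θ : Type*} [MeasurableSpace Θ]
    (p : X → Θ → ℝ) (hp_meas : Measurable (Function.uncurry p))
    (B : ℝ) (hB : 0 < B)
    (hbound : ∀ θ, ∀ᵐ x ∂ν, Real.exp (-B) ≤ p x θ ∧ p x θ ≤ 1)
    (S : Set Θ) (hS : S.Countable)
    (w : Θ → ℝ) (hw_nonneg : ∀ θ ∈ S, 0 ≤ w θ)
    (hw_sum : ∑' θ : S, w θ = 1)
    (ξ : ℝ) (hξ : 0 < ξ) (n : ℕ) (hn : 1 ≤ n)
    (E : ℕ) (hE : 1 ≤ E)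
    (A : ℝ) (hA : A = (1 / 2) * ((B + 1) / (1 - Real.exp (-B - 1)) - 1)) :
    ENNReal.ofReal (1 - ξ) ≤
      (Measure.pi fun _ : Fin n => ν)
        {D : Fin n → X | ∀ θs : Fin E → Θ,
          (∀ j : Fin E, θs j ∈ S ∧ 0 < w (θs j)) →
          ensembleCodeLength p ν E θs ≤
            ((B + 1) / (1 - Real.exp (-B - 1))) *
              ((1 / (E : ℝ)) * ∑ j : Fin E, empRisk p n D (θs j)
                - ensembleEmpVariance p n D E θs
                - ((1 / (E : ℝ)) * (∑ j : Fin E, Real.log (w (θs j)))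
                    + Real.log ξ) / n) + A} := by
  subst hA
  have : Countable S := hS.to_subtype
  have hp : ∀ θ, AEMeasurable (fun x => p x θ) ν := fun θ =>
    (hp_meas.comp measurable_prodMk_right).aemeasurable
  have hbound' : ∀ θ, ∀ᵐ x ∂ν, exp (-B - 1) ≤ p x θ ∧ p x θ ≤ 1 := fun θ =>
    (hbound θ).mono fun x hx => ⟨(exp_le_exp.2 (by linarith)).trans hx.1, hx.2⟩
  have hsample : ∀ᵐ D ∂(Measure.pi fun _ : Fin n => ν), ∀ θ : S, ∀ i, 0 < p (D i) θ :=
    ae_all_iff.2 fun θ => ae_all_iff.2 fun i =>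
      (Measure.tendsto_eval_ae_ae (μ := fun _ => ν) (i := i)).eventually <|
        (hbound θ).mono fun x hx => (exp_pos _).trans_le hx.1
  refine (ofReal_one_sub_le_measure_forall_meanLoss_le ν hS (fun θ _ => hp θ)
    (fun θ _ => (hbound θ).mono fun x hx => ⟨(exp_pos _).le.trans hx.1, hx.2⟩) hw_nonneg hw_sum
    hξ (by omega)).trans (measure_mono_ae ?_)
  filter_upwards [hsample] with D hD hocc θs hθs
  exact ensembleCodeLength_le_of_forall_meanLoss_le hB.le (by omega) D θs (fun j => hp _)
    (fun j => hbound' _) (fun i j => hD ⟨θs j, (hθs j).1⟩ i) w ξ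
    fun j => hocc (θs j) (hθs j).1 (hθs j).2

/-- Second-order PAC-Bayes bound for ensembles under a countable
discrete prior `π_F = Σ_{θ'∈S} w_{θ'} δ_{θ'}`: with `ν^n`-probability at least
`1 − ξ` over an i.i.d. sample `D`, simultaneously for all tuples
`(θ_1, …, θ_E) ∈ S^E` with positive weights,
`L̄(ρ_E) ≤ ((B+1)/(1−e^{−B−1})) ((1/E) Σ_j L̂(D,θ_j) − V̂_E(D,θ) − ((1/E) Σ_j ln w_{θ_j} + ln ξ)/n) + A`
with `A = (1/2)((B+1)/(1−e^{−B−1}) − 1)` (here `KL(ρ_E,π_F) = −(1/E) Σ_j ln w_{θ_j}`). -/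
theorem second_order_pac_bayes_bound_ensembles
    {X : Type*} [MeasurableSpace X] (μ : Measure X) [SigmaFinite μ]
    (ν : Measure X) [IsProbabilityMeasure ν]
    {Θ : Type*} [MeasurableSpace Θ]
    (p : X → Θ → ℝ) (hp_meas : Measurable (Function.uncurry p))
    (hp_dens : ∀ θ, IsProbabilityMeasure
      (μ.withDensity (fun x => ENNReal.ofReal (p x θ))))
    (B : ℝ) (hB : 0 < B)
    (hbound : ∀ θ, ∀ᵐ x ∂ν, Real.exp (-B) ≤ p x θ ∧ p x θ ≤ 1)
    (S : Set Θ) (hS : S.Countable)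
    (w : Θ → ℝ) (hw_nonneg : ∀ θ ∈ S, 0 ≤ w θ)
    (hw_sum : ∑' θ : S, w θ = 1)
    (ξ : ℝ) (hξ : 0 < ξ) (hξ1 : ξ < 1) (n : ℕ) (hn : 1 ≤ n)
    (E : ℕ) (hE : 1 ≤ E)
    (A : ℝ) (hA : A = (1 / 2) * ((B + 1) / (1 - Real.exp (-B - 1)) - 1)) :
    ENNReal.ofReal (1 - ξ) ≤
      (Measure.pi fun _ : Fin n => ν)
        {D : Fin n → X | ∀ θs : Fin E → Θ,
          (∀ j : Fin E, θs j ∈ S ∧ 0 < w (θs j)) →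
          ensembleCodeLength p ν E θs ≤
            ((B + 1) / (1 - Real.exp (-B - 1))) *
              ((1 / (E : ℝ)) * ∑ j : Fin E, empRisk p n D (θs j)
                - ensembleEmpVariance p n D E θs
                - ((1 / (E : ℝ)) * (∑ j : Fin E, Real.log (w (θs j)))
                    + Real.log ξ) / n) + A} :=
  second_order_pac_bayes_bound_ensembles_general ν p hp_meas B hB hbound S hS w hw_nonneg hw_sum ξ
    hξ n hn E hE A hA
end
end
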